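/- arXiv:1912.00644 — 3 statements merged into one kernel-verified Lean document; each statement's English description precedes it below -/
import Mathlib

section
/- Let y ∈ ℂ^{p_1} ⊕ … ⊕ ℂ^{p_N} be nonzero and suppose λ y_k = G_k Σ_{j=1}^N e_{kj} Δ_{kj} y_j for all k, where G_k ∈ ℂ^{p_k × m_k}, e_{kj} ≥ 0, and Δ_{kj} ∈ ℂ^{m_k × p_j}. Then the vector z = (‖y_1‖², …, ‖y_N‖²) ∈ ℝ^N_{≥0} is nonzero and satisfies |λ|² z ≤ ‖Δ‖² · diag(‖G_k‖²) · E^{∘2} · z componentwise, where ‖Δ‖ = max_k ‖Δ_k‖ with Δ_k = [Δ_{k1}, …, Δ_{kN}] acting on the direct sum with norm ‖y‖² = Σ‖y_j‖². -/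
/-! Apply the `k`-th equation to the weighted vector `w = (e_{kj} y_j)_j`: then
`μ y_k = G_k (Δ_k w)`, so `|μ| ‖y_k‖ ≤ ‖G_k‖ ‖Δ_k‖ ‖w‖`, and `‖w‖² = Σ_j e_{kj}² ‖y_j‖²`
because the direct sum carries the `ℓ²` norm. -/

open Finset

theorem PiLp.norm_sq_toLp_smul {𝕜 ι : Type*} [RCLike 𝕜] [Fintype ι] {β : ι → Type*}
    [∀ j, SeminormedAddCommGroup (β j)] [∀ j, NormedSpace 𝕜 (β j)] (c : ι → ℝ) (y : ∀ j, β j) :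
    ‖WithLp.toLp 2 (fun j => (c j : 𝕜) • y j)‖ ^ 2 = ∑ j, c j ^ 2 * ‖y j‖ ^ 2 := by
  rw [PiLp.norm_sq_eq_of_L2]
  refine sum_congr rfl fun j _ => ?_
  simp only [norm_smul, RCLike.norm_ofReal, mul_pow, sq_abs]

theorem PiLp.sq_norm_components_ne_zero {ι : Type*} [Fintype ι] {β : ι → Type*}
    [∀ j, NormedAddCommGroup (β j)] {y : PiLp 2 β} (hy : y ≠ 0) :
    (fun k => ‖y k‖ ^ 2) ≠ 0 := by
  contrapose! hy
  ext k
  simpa using congrFun hy k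

theorem sq_norm_smul_le_of_smul_eq_comp {𝕜 E F W : Type*} [NontriviallyNormedField 𝕜]
    [SeminormedAddCommGroup E] [SeminormedAddCommGroup F] [SeminormedAddCommGroup W]
    [NormedSpace 𝕜 E] [NormedSpace 𝕜 F] [NormedSpace 𝕜 W]
    {μ : 𝕜} {x : E} (G : F →L[𝕜] E) (R : W →L[𝕜] F) (w : W) {S : ℝ} (hS : ‖R‖ ≤ S)
    (h : μ • x = G (R w)) :
    ‖μ‖ ^ 2 * ‖x‖ ^ 2 ≤ S ^ 2 * (‖G‖ ^ 2 * ‖w‖ ^ 2) := by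
  have hle : ‖μ‖ * ‖x‖ ≤ ‖G‖ * (S * ‖w‖) :=
    calc ‖μ‖ * ‖x‖ = ‖G (R w)‖ := by rw [← norm_smul, h]
      _ ≤ ‖G‖ * ‖R w‖ := G.le_opNorm _
      _ ≤ ‖G‖ * (S * ‖w‖) := by gcongr; exact R.le_of_opNorm_le hS w
  calc ‖μ‖ ^ 2 * ‖x‖ ^ 2 = (‖μ‖ * ‖x‖) ^ 2 := by ring
    _ ≤ (‖G‖ * (S * ‖w‖)) ^ 2 := by gcongr
    _ = S ^ 2 * (‖G‖ ^ 2 * ‖w‖ ^ 2) := by ring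

theorem componentwise_eigenvector_estimate_general
    {N : ℕ} (p m : Fin N → ℕ)
    (G : ∀ k, EuclideanSpace ℂ (Fin (m k)) →L[ℂ] EuclideanSpace ℂ (Fin (p k)))
    (e : Fin N → Fin N → ℝ)
    (Δ : ∀ k j, EuclideanSpace ℂ (Fin (p j)) →L[ℂ] EuclideanSpace ℂ (Fin (m k)))
    (Δrow : ∀ k, (PiLp 2 fun j => EuclideanSpace ℂ (Fin (p j))) →L[ℂ]
      EuclideanSpace ℂ (Fin (m k)))
    (hrow : ∀ k (y : PiLp 2 fun j => EuclideanSpace ℂ (Fin (p j))),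
      Δrow k y = ∑ j, Δ k j (y j))
    (μ : ℂ) (y : PiLp 2 fun j => EuclideanSpace ℂ (Fin (p j))) (hy : y ≠ 0)
    (heig : ∀ k, μ • y k = (G k) (∑ j, ((e k j : ℂ)) • (Δ k j) (y j))) :
    (fun k => ‖y k‖ ^ 2) ≠ (0 : Fin N → ℝ) ∧
      ∀ k, ‖μ‖ ^ 2 * ‖y k‖ ^ 2 ≤
        (⨆ i, ‖Δrow i‖) ^ 2 * (‖G k‖ ^ 2 * ∑ j, (e k j) ^ 2 * ‖y j‖ ^ 2) := by
  refine ⟨PiLp.sq_norm_components_ne_zero hy, fun k => ?_⟩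
  have heig_w : μ • y k = G k (Δrow k (WithLp.toLp 2 fun j => (e k j : ℂ) • y j)) := by
    simp only [heig, hrow, map_smul]
  rw [← PiLp.norm_sq_toLp_smul (𝕜 := ℂ) (β := fun j => EuclideanSpace ℂ (Fin (p j)))]
  exact sq_norm_smul_le_of_smul_eq_comp (G k) (Δrow k) _
    (le_ciSup (Finite.bddAbove_range fun i => ‖Δrow i‖) k) heig_w

/-- If `y ≠ 0` satisfies the componentwise eigenvalue equation
`μ y_k = G_k Σ_j e_{kj} Δ_{kj} y_j`, then the vector `z = (‖y_k‖²)_k` is nonzero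
and satisfies `|μ|² z ≤ ‖Δ‖² · diag(‖G_k‖²) · E^{∘2} · z` componentwise, where
`‖Δ‖ = max_k ‖Δ_k‖` is the maximum of the block-row norms. -/
theorem componentwise_eigenvector_estimate
    {N : ℕ} (hN : 0 < N) (p m : Fin N → ℕ)
    (G : ∀ k, EuclideanSpace ℂ (Fin (m k)) →L[ℂ] EuclideanSpace ℂ (Fin (p k)))
    (e : Fin N → Fin N → ℝ) (he : ∀ k j, 0 ≤ e k j)
    (Δ : ∀ k j, EuclideanSpace ℂ (Fin (p j)) →L[ℂ] EuclideanSpace ℂ (Fin (m k)))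
    (Δrow : ∀ k, (PiLp 2 fun j => EuclideanSpace ℂ (Fin (p j))) →L[ℂ]
      EuclideanSpace ℂ (Fin (m k)))
    (hrow : ∀ k (y : PiLp 2 fun j => EuclideanSpace ℂ (Fin (p j))),
      Δrow k y = ∑ j, Δ k j (y j))
    (μ : ℂ) (y : PiLp 2 fun j => EuclideanSpace ℂ (Fin (p j))) (hy : y ≠ 0)
    (heig : ∀ k, μ • y k = (G k) (∑ j, ((e k j : ℂ)) • (Δ k j) (y j))) :
    (fun k => ‖y k‖ ^ 2) ≠ (0 : Fin N → ℝ) ∧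
      ∀ k, ‖μ‖ ^ 2 * ‖y k‖ ^ 2 ≤
        (⨆ i, ‖Δrow i‖) ^ 2 * (‖G k‖ ^ 2 * ∑ j, (e k j) ^ 2 * ‖y j‖ ^ 2) :=
  componentwise_eigenvector_estimate_general p m G e Δ Δrow hrow μ y hy heig
end

section
/- Fix vectors u_k ∈ U_k and y_l ∈ Y_l (finite-dimensional complex inner product spaces) and non-negative reals e_{kl}. Define rank-one maps Δ_{kl} : Y_l → U_k by Δ_{kl}(y) = (e_{kl} ⟨y, y_l⟩ / Σ_{j} e_{kj}² ‖y_j‖²) u_k when Σ_j e_{kj}² ‖y_j‖² ≠ 0, and Δ_{kl} = 0 otherwise. Then for each k with Σ_j e_{kj}² ‖y_j‖² ≠ 0 one has Σ_{l=1}^N e_{kl} Δ_{kl}(y_l) = u_k, and the row norms satisfy Σ_{l=1}^N ‖Δ_{kl}‖² = ‖u_k‖² / Σ_{j} e_{kj}² ‖y_j‖². -/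
/-!
With `S = Σ_j c_j² ‖y_j‖²`, the map `Δ_i = (c_i / S) ⟨y_i, ·⟩ u` sends `y_i` to
`(c_i ‖y_i‖² / S) u`, so the weights `c_i² ‖y_i‖² / S` of `Σ_i c_i Δ_i y_i` add up to one.
A rank-one map `⟨y, ·⟩ u` has operator norm `‖y‖ ‖u‖`, so `Σ_i ‖Δ_i‖²` is
`Σ_i c_i² ‖y_i‖² ‖u‖² / S² = ‖u‖² / S`.
-/

open scoped InnerProductSpace

section FeedbackGain

variable {𝕜 ι E : Type*} [RCLike 𝕜] [Fintype ι] {F : ι → Type*}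
  [NormedAddCommGroup E] [InnerProductSpace 𝕜 E]
  [∀ i, NormedAddCommGroup (F i)] [∀ i, InnerProductSpace 𝕜 (F i)]

variable (𝕜) in
noncomputable def feedbackGain (c : ι → ℝ) (y : ∀ i, F i) (u : E) (i : ι) : F i →L[𝕜] E :=
  ((c i / ∑ j, c j ^ 2 * ‖y j‖ ^ 2 : ℝ) : 𝕜) • (innerSL 𝕜 (y i)).smulRight u

variable (c : ι → ℝ) (y : ∀ i, F i) (u : E)

theorem feedbackGain_apply (i : ι) (v : F i) :
    feedbackGain 𝕜 c y u i v =
      (((c i / ∑ j, c j ^ 2 * ‖y j‖ ^ 2 : ℝ) : 𝕜) * ⟪y i, v⟫_𝕜) • u := by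
  simp only [feedbackGain, FunLike.coe_smul, Pi.smul_apply,
    ContinuousLinearMap.smulRight_apply, innerSL_apply_apply, smul_smul]

theorem sum_smul_feedbackGain_apply_self (hS : ∑ j, c j ^ 2 * ‖y j‖ ^ 2 ≠ 0) :
    ∑ i, (c i : 𝕜) • feedbackGain 𝕜 c y u i (y i) = u := by
  have hterm : ∀ i, (c i : 𝕜) • feedbackGain 𝕜 c y u i (y i) =
      ((c i ^ 2 * ‖y i‖ ^ 2 / ∑ j, c j ^ 2 * ‖y j‖ ^ 2 : ℝ) : 𝕜) • u := by
    intro i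
    rw [feedbackGain_apply, smul_smul, inner_self_eq_norm_sq_to_K]
    simp only [RCLike.ofReal_div, RCLike.ofReal_mul, RCLike.ofReal_pow]
    congr 1
    ring
  have hweights : ∑ i, c i ^ 2 * ‖y i‖ ^ 2 / ∑ j, c j ^ 2 * ‖y j‖ ^ 2 = 1 := by
    rw [← Finset.sum_div, div_self hS]
  simp only [hterm, ← Finset.sum_smul, ← RCLike.ofReal_sum, hweights, RCLike.ofReal_one,
    one_smul]

theorem norm_feedbackGain (i : ι) :
    ‖feedbackGain 𝕜 c y u i‖ = |c i| * ‖y i‖ * ‖u‖ / ∑ j, c j ^ 2 * ‖y j‖ ^ 2 := by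
  have hS : 0 ≤ ∑ j, c j ^ 2 * ‖y j‖ ^ 2 := by positivity
  rw [feedbackGain, norm_smul, ContinuousLinearMap.norm_smulRight_apply, innerSL_apply_norm,
    RCLike.norm_ofReal, abs_div, abs_of_nonneg hS]
  ring

theorem sum_norm_feedbackGain_sq :
    ∑ i, ‖feedbackGain 𝕜 c y u i‖ ^ 2 = ‖u‖ ^ 2 / ∑ j, c j ^ 2 * ‖y j‖ ^ 2 := by
  set S := ∑ j, c j ^ 2 * ‖y j‖ ^ 2 with hS_def
  calc ∑ i, ‖feedbackGain 𝕜 c y u i‖ ^ 2 = S * (‖u‖ ^ 2 / S ^ 2) := by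
        rw [Finset.sum_mul]
        refine Finset.sum_congr rfl fun i _ => ?_
        rw [norm_feedbackGain, ← hS_def, div_pow, mul_pow, mul_pow, sq_abs]
        ring
    _ = ‖u‖ ^ 2 / S := by
        rcases eq_or_ne S 0 with hS | hS
        · simp [hS]
        · field_simp

end FeedbackGain

theorem rank_one_feedback_construction_general
    {N : ℕ} {U Y : Fin N → Type*}
    [∀ k, NormedAddCommGroup (U k)] [∀ k, InnerProductSpace ℂ (U k)]
    [∀ l, NormedAddCommGroup (Y l)] [∀ l, InnerProductSpace ℂ (Y l)]
    (u : ∀ k, U k) (yv : ∀ l, Y l)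
    (e : Fin N → Fin N → ℝ)
    (Δ : ∀ k l, Y l →L[ℂ] U k)
    (hΔ : ∀ k l (y : Y l),
      Δ k l y =
        if (∑ j, (e k j) ^ 2 * ‖yv j‖ ^ 2) = 0 then 0
        else (((e k l : ℂ) * (inner ℂ (yv l) y : ℂ)) /
          ((∑ j, (e k j) ^ 2 * ‖yv j‖ ^ 2 : ℝ) : ℂ)) • u k)
    (k : Fin N) (hk : (∑ j, (e k j) ^ 2 * ‖yv j‖ ^ 2) ≠ 0) :
    (∑ l, (e k l : ℂ) • Δ k l (yv l)) = u k ∧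
      (∑ l, ‖Δ k l‖ ^ 2) = ‖u k‖ ^ 2 / (∑ j, (e k j) ^ 2 * ‖yv j‖ ^ 2) := by
  have hΔk : Δ k = feedbackGain ℂ (e k) yv (u k) := by
    funext l
    ext y
    rw [hΔ, if_neg hk, feedbackGain_apply]
    congr 1
    simp only [RCLike.ofReal_eq_complex_ofReal, Complex.ofReal_div]
    ring
  rw [hΔk]
  exact ⟨sum_smul_feedbackGain_apply_self _ _ _ hk, sum_norm_feedbackGain_sq _ _ _⟩

/-- For fixed vectors `u_k ∈ U_k`, `y_l ∈ Y_l` and `e_{kl} ≥ 0`, the rank-one maps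
`Δ_{kl}(y) = (e_{kl} ⟨y, y_l⟩ / Σ_j e_{kj}² ‖y_j‖²) u_k` (and `Δ_{kl} = 0` if the
denominator vanishes) satisfy, for each `k` with `Σ_j e_{kj}² ‖y_j‖² ≠ 0`:
`Σ_l e_{kl} Δ_{kl}(y_l) = u_k` and `Σ_l ‖Δ_{kl}‖² = ‖u_k‖² / Σ_j e_{kj}² ‖y_j‖²`. -/
theorem rank_one_feedback_construction
    {N : ℕ} {U Y : Fin N → Type*}
    [∀ k, NormedAddCommGroup (U k)] [∀ k, InnerProductSpace ℂ (U k)]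
    [∀ k, FiniteDimensional ℂ (U k)]
    [∀ l, NormedAddCommGroup (Y l)] [∀ l, InnerProductSpace ℂ (Y l)]
    [∀ l, FiniteDimensional ℂ (Y l)]
    (u : ∀ k, U k) (yv : ∀ l, Y l)
    (e : Fin N → Fin N → ℝ) (he : ∀ k l, 0 ≤ e k l)
    (Δ : ∀ k l, Y l →L[ℂ] U k)
    (hΔ : ∀ k l (y : Y l),
      Δ k l y =
        if (∑ j, (e k j) ^ 2 * ‖yv j‖ ^ 2) = 0 then 0
        else (((e k l : ℂ) * (inner ℂ (yv l) y : ℂ)) /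
          ((∑ j, (e k j) ^ 2 * ‖yv j‖ ^ 2 : ℝ) : ℂ)) • u k)
    (k : Fin N) (hk : (∑ j, (e k j) ^ 2 * ‖yv j‖ ^ 2) ≠ 0) :
    (∑ l, (e k l : ℂ) • Δ k l (yv l)) = u k ∧
      (∑ l, ‖Δ k l‖ ^ 2) = ‖u k‖ ^ 2 / (∑ j, (e k j) ^ 2 * ‖yv j‖ ^ 2) :=
  rank_one_feedback_construction_general u yv e Δ hΔ k hk
end

section
/- Let (T(t))_{t≥0} be a C₀-semigroup on a Hilbert space X such that ∫₀^∞ ‖T(t)x‖² dt ≤ M‖x‖² for all x ∈ X and some M > 0. Then (T(t))_{t≥0} is exponentially stable, i.e., there exist constants C ≥ 1, ε > 0 with ‖T(t)‖ ≤ C e^{-εt} for all t ≥ 0. -/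
open MeasureTheory
open scoped ENNReal NNReal

/-!
By the uniform boundedness principle `‖T r‖ ≤ c` for `r ∈ [0, 1]`. As
`‖T t x‖ ≤ ‖T (t - s)‖ ‖T s x‖`, the constant `‖T t x‖²` is dominated by `c² ‖T s x‖²` for `s` in
an interval of length `ℓ` ending at `t` on which `‖T (t - s)‖ ≤ c`, and integrating gives
`ℓ ‖T t x‖² ≤ c² M ‖x‖²`. With `ℓ = 1` this bounds the semigroup uniformly by some `L`; then with
`c = L` and `ℓ = t` large it gives `‖T τ‖ ≤ 1/2` for some `τ > 0`, and submultiplicativity of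
`t ↦ ‖T t‖` turns this into exponential decay.
-/

open Set

theorem exists_forall_opNorm_le_of_isCompact {ι 𝕜 E F : Type*} [TopologicalSpace ι]
    [NontriviallyNormedField 𝕜] [NormedAddCommGroup E] [NormedSpace 𝕜 E] [CompleteSpace E]
    [NormedAddCommGroup F] [NormedSpace 𝕜 F] {s : Set ι} (hs : IsCompact s)
    {g : ι → E →L[𝕜] F} (hg : ∀ x, ContinuousOn (fun i => g i x) s) :
    ∃ C, ∀ i ∈ s, ‖g i‖ ≤ C := by
  obtain ⟨C, hC⟩ := banach_steinhaus (g := fun i : s => g i) fun x => by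
    obtain ⟨C, hC⟩ := hs.exists_bound_of_continuousOn (hg x)
    exact ⟨C, fun i => hC i i.2⟩
  exact ⟨C, fun i hi => hC ⟨i, hi⟩⟩

theorem ofReal_sub_mul_le_setLIntegral_Ioc {a t y : ℝ} {f : ℝ → ℝ≥0∞} (hy : 0 ≤ y)
    (hf : ∀ s ∈ Ioc a t, ENNReal.ofReal y ≤ f s) :
    ENNReal.ofReal ((t - a) * y) ≤ ∫⁻ s in Ioc a t, f s := calc
  ENNReal.ofReal ((t - a) * y) = ∫⁻ _ in Ioc a t, ENNReal.ofReal y := by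
    rw [setLIntegral_const, Real.volume_Ioc, ENNReal.ofReal_mul' hy, mul_comm]
  _ ≤ ∫⁻ s in Ioc a t, f s := setLIntegral_mono' measurableSet_Ioc hf

theorem exists_le_mul_exp_neg_of_submultiplicative {φ : ℝ → ℝ} {L τ q : ℝ}
    (hφ : ∀ t, 0 ≤ φ t) (hmul : ∀ s t, 0 ≤ s → 0 ≤ t → φ (s + t) ≤ φ s * φ t)
    (hL : ∀ t, 0 ≤ t → φ t ≤ L) (hτ : 0 < τ) (hq0 : 0 < q) (hq1 : q < 1) (hφτ : φ τ ≤ q) :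
    ∃ C ε, 0 < ε ∧ ∀ t, 0 ≤ t → φ t ≤ C * Real.exp (-ε * t) := by
  have hshift : ∀ r, 0 ≤ r → ∀ n : ℕ, φ (r + n * τ) ≤ L * q ^ n := by
    intro r hr n
    induction n with
    | zero => simpa using hL r hr
    | succ n ih =>
      calc φ (r + (n + 1 : ℕ) * τ) = φ ((r + n * τ) + τ) := by push_cast; ring_nf
        _ ≤ φ (r + n * τ) * φ τ := hmul _ _ (by positivity) hτ.le
        _ ≤ L * q ^ n * q := mul_le_mul ih hφτ (hφ τ) ((hφ _).trans ih)
        _ = L * q ^ (n + 1) := by ring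
  have hL0 : 0 ≤ L := (hφ 0).trans (hL 0 le_rfl)
  refine ⟨L / q, -Real.log q / τ, div_pos (neg_pos.2 (Real.log_neg hq0 hq1)) hτ, fun t ht => ?_⟩
  set n := ⌊t / τ⌋₊
  have hnt : n * τ ≤ t := (le_div_iff₀ hτ).1 (Nat.floor_le (by positivity))
  have hpow : q ^ (n + 1) ≤ q ^ (t / τ) := by
    rw [← Real.rpow_natCast]
    exact Real.rpow_le_rpow_of_exponent_ge hq0 hq1.le
      (by push_cast; exact (Nat.lt_floor_add_one _).le)
  calc φ t = φ ((t - n * τ) + n * τ) := by ring_nf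
    _ ≤ L * q ^ n := hshift _ (sub_nonneg.2 hnt) n
    _ = L / q * q ^ (n + 1) := by field_simp; ring
    _ ≤ L / q * q ^ (t / τ) := by gcongr
    _ = L / q * Real.exp (-(-Real.log q / τ) * t) := by
      rw [Real.rpow_def_of_pos hq0]; ring_nf

section Semigroup

variable {𝕜 E : Type*} [NontriviallyNormedField 𝕜] [NormedAddCommGroup E] [NormedSpace 𝕜 E]
  {T : ℝ → E →L[𝕜] E}

theorem norm_apply_le_opNorm_sub_mul
    (hT : ∀ s t : ℝ, 0 ≤ s → 0 ≤ t → T (s + t) = (T s).comp (T t))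
    {s t : ℝ} (hs : 0 ≤ s) (hst : s ≤ t) (x : E) : ‖T t x‖ ≤ ‖T (t - s)‖ * ‖T s x‖ := by
  have h := hT (t - s) s (sub_nonneg.2 hst) hs
  rw [sub_add_cancel] at h
  rw [h]
  exact (T (t - s)).le_opNorm _

variable (hT : ∀ s t : ℝ, 0 ≤ s → 0 ≤ t → T (s + t) = (T s).comp (T t)) {M : ℝ}
  (hM : 0 ≤ M)
  (hint : ∀ x : E, (∫⁻ t in Ioi (0 : ℝ), (‖T t x‖₊ : ℝ≥0∞) ^ 2) ≤ ENNReal.ofReal (M * ‖x‖ ^ 2))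
include hT hM hint

theorem sub_mul_sq_norm_apply_le {a t c : ℝ} (ha : 0 ≤ a) (hat : a ≤ t)
    (hc : ∀ r ∈ Icc 0 (t - a), ‖T r‖ ≤ c) (x : E) :
    (t - a) * ‖T t x‖ ^ 2 ≤ c ^ 2 * (M * ‖x‖ ^ 2) := by
  have hc0 : 0 ≤ c := (norm_nonneg _).trans (hc 0 ⟨le_rfl, sub_nonneg.2 hat⟩)
  have hsq : ∀ y : E, (‖y‖₊ : ℝ≥0∞) ^ 2 = ENNReal.ofReal (‖y‖ ^ 2) := fun y => by
    rw [ENNReal.ofReal_pow (norm_nonneg _), ofReal_norm]; rfl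
  have hdom : ∀ s ∈ Ioc a t,
      ENNReal.ofReal (‖T t x‖ ^ 2) ≤ ENNReal.ofReal (c ^ 2) * (‖T s x‖₊ : ℝ≥0∞) ^ 2 := by
    intro s hs
    have hs0 : 0 ≤ s := ha.trans hs.1.le
    have h := (norm_apply_le_opNorm_sub_mul hT hs0 hs.2 x).trans <|
      mul_le_mul_of_nonneg_right (hc _ ⟨sub_nonneg.2 hs.2, by linarith [hs.1]⟩) (norm_nonneg _)
    rw [hsq, ← ENNReal.ofReal_mul (by positivity), ← mul_pow]
    exact ENNReal.ofReal_le_ofReal (pow_le_pow_left₀ (norm_nonneg _) h 2)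
  have hsub : Ioc a t ⊆ Ioi 0 := fun s hs => ha.trans_lt hs.1
  have key : ENNReal.ofReal ((t - a) * ‖T t x‖ ^ 2) ≤ ENNReal.ofReal (c ^ 2 * (M * ‖x‖ ^ 2)) :=
    calc ENNReal.ofReal ((t - a) * ‖T t x‖ ^ 2)
        ≤ ∫⁻ s in Ioc a t, ENNReal.ofReal (c ^ 2) * (‖T s x‖₊ : ℝ≥0∞) ^ 2 :=
          ofReal_sub_mul_le_setLIntegral_Ioc (by positivity) hdom
      _ = ENNReal.ofReal (c ^ 2) * ∫⁻ s in Ioc a t, (‖T s x‖₊ : ℝ≥0∞) ^ 2 :=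
          lintegral_const_mul' _ _ ENNReal.ofReal_ne_top
      _ ≤ ENNReal.ofReal (c ^ 2) * ENNReal.ofReal (M * ‖x‖ ^ 2) :=
          by gcongr; exact (lintegral_mono_set hsub).trans (hint x)
      _ = ENNReal.ofReal (c ^ 2 * (M * ‖x‖ ^ 2)) := (ENNReal.ofReal_mul (by positivity)).symm
  exact (ENNReal.ofReal_le_ofReal_iff (by positivity)).1 key

theorem opNorm_le_max_of_forall_Icc_opNorm_le {K : ℝ} (hK : ∀ t ∈ Icc (0 : ℝ) 1, ‖T t‖ ≤ K)
    {t : ℝ} (ht : 0 ≤ t) : ‖T t‖ ≤ max K (K * √M) := by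
  rcases le_or_gt t 1 with ht1 | ht1
  · exact (hK t ⟨ht, ht1⟩).trans (le_max_left _ _)
  have hK0 : 0 ≤ K := (norm_nonneg _).trans (hK 0 ⟨le_rfl, zero_le_one⟩)
  refine (ContinuousLinearMap.opNorm_le_bound _ (by positivity) fun x => ?_).trans (le_max_right _ _)
  have h := sub_mul_sq_norm_apply_le hT hM hint (a := t - 1) (t := t) (by linarith) (by linarith)
    (fun r hr => hK r (by simpa using hr)) x
  rw [sub_sub_cancel, one_mul] at h
  refine (pow_le_pow_iff_left₀ (norm_nonneg _) (by positivity) two_ne_zero).1 ?_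
  rwa [mul_pow, mul_pow, Real.sq_sqrt hM, mul_assoc]

theorem opNorm_le_of_sq_mul_le {L τ q : ℝ} (hL : ∀ t, 0 ≤ t → ‖T t‖ ≤ L) (hτ : 0 < τ)
    (hq : 0 ≤ q) (hLq : L ^ 2 * M ≤ τ * q ^ 2) : ‖T τ‖ ≤ q := by
  refine ContinuousLinearMap.opNorm_le_bound _ hq fun x => ?_
  have h := sub_mul_sq_norm_apply_le hT hM hint le_rfl hτ.le (fun r hr => hL r hr.1) x
  rw [sub_zero] at h
  refine (pow_le_pow_iff_left₀ (norm_nonneg _) (by positivity) two_ne_zero).1 ?_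
  refine le_of_mul_le_mul_left ?_ hτ
  calc τ * ‖T τ x‖ ^ 2 ≤ L ^ 2 * M * ‖x‖ ^ 2 := by linarith
    _ ≤ τ * q ^ 2 * ‖x‖ ^ 2 := by gcongr
    _ = τ * (q * ‖x‖) ^ 2 := by ring

end Semigroup

theorem datko_theorem_general
    {X : Type*} [NormedAddCommGroup X] [InnerProductSpace ℂ X] [CompleteSpace X]
    (T : ℝ → X →L[ℂ] X)
    (hTsem : ∀ s t : ℝ, 0 ≤ s → 0 ≤ t → T (s + t) = (T s).comp (T t))
    (hTcont : ∀ x : X, ContinuousOn (fun t => T t x) (Set.Ici (0 : ℝ)))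
    (M : ℝ) (hM : 0 < M)
    (hint : ∀ x : X,
      (∫⁻ t in Set.Ioi (0 : ℝ), (‖T t x‖₊ : ℝ≥0∞) ^ 2) ≤ ENNReal.ofReal (M * ‖x‖ ^ 2)) :
    ∃ C : ℝ, 1 ≤ C ∧ ∃ ε : ℝ, 0 < ε ∧
      ∀ t : ℝ, 0 ≤ t → ‖T t‖ ≤ C * Real.exp (-ε * t) := by
  obtain ⟨K, hK⟩ := exists_forall_opNorm_le_of_isCompact isCompact_Icc fun x =>
    (hTcont x).mono Icc_subset_Ici_self
  set L := max K (K * √M)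
  have hL : ∀ t, 0 ≤ t → ‖T t‖ ≤ L := fun t =>
    opNorm_le_max_of_forall_Icc_opNorm_le hTsem hM.le hint hK
  have hhalf : ‖T (4 * L ^ 2 * M + 1)‖ ≤ 1 / 2 :=
    opNorm_le_of_sq_mul_le hTsem hM.le hint hL (by positivity) (by norm_num) (by nlinarith)
  obtain ⟨C, ε, hε, hdecay⟩ := exists_le_mul_exp_neg_of_submultiplicative (fun t => norm_nonneg _)
    (fun s t hs ht => (hTsem s t hs ht).symm ▸ (T s).opNorm_comp_le (T t)) hL (by positivity)
    (by norm_num) (by norm_num) hhalf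
  exact ⟨max C 1, le_max_right _ _, ε, hε, fun t ht =>
    (hdecay t ht).trans (by gcongr; exact le_max_left _ _)⟩

/-- Datko's theorem (case `p = 2`): a `C₀`-semigroup `(T(t))_{t≥0}` on a Hilbert space
satisfying `∫₀^∞ ‖T(t)x‖² dt ≤ M ‖x‖²` for all `x` is exponentially stable, i.e. there
are `C ≥ 1` and `ε > 0` with `‖T(t)‖ ≤ C e^{-εt}` for all `t ≥ 0`. -/
theorem datko_theorem
    {X : Type*} [NormedAddCommGroup X] [InnerProductSpace ℂ X] [CompleteSpace X]
    (T : ℝ → X →L[ℂ] X)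
    (hT0 : T 0 = 1)
    (hTsem : ∀ s t : ℝ, 0 ≤ s → 0 ≤ t → T (s + t) = (T s).comp (T t))
    (hTcont : ∀ x : X, ContinuousOn (fun t => T t x) (Set.Ici (0 : ℝ)))
    (M : ℝ) (hM : 0 < M)
    (hint : ∀ x : X,
      (∫⁻ t in Set.Ioi (0 : ℝ), (‖T t x‖₊ : ℝ≥0∞) ^ 2) ≤ ENNReal.ofReal (M * ‖x‖ ^ 2)) :
    ∃ C : ℝ, 1 ≤ C ∧ ∃ ε : ℝ, 0 < ε ∧
      ∀ t : ℝ, 0 ≤ t → ‖T t‖ ≤ C * Real.exp (-ε * t) :=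
  datko_theorem_general T hTsem hTcont M hM hint
end
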